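/- Let n ≥ 2 be an integer, t ∈ [0, π/2), s = sin t, and let E₁,…,E_{n+1} ∈ ℝⁿ be unit vectors with ⟨E_i, E_j⟩ = -1/n for i ≠ j. For 0 ≤ k ≤ n-1 let c = (1/(n-k+1))·(E₁ + ⋯ + E_{n-k+1}) and c' = (1/(n-k))·(E₁ + ⋯ + E_{n-k}), where for k = 0 one takes c = (1/(n+1))·(E₁ + ⋯ + E_{n+1}) = 0. Then d_K(s·c, s·c') = artanh( s·√(1 - k/(n(n-k+1))) / ((n-k)·√(1 - s²·k/(n(n-k+1)))) ). (This is the edge length d_{n-k} of the fundamental orthoscheme of the regular simplex τ[n,t].) -/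

import Mathlib

open scoped RealInnerProductSpace
open Real

noncomputable def arcosh (x : ℝ) : ℝ := Real.log (x + Real.sqrt (x ^ 2 - 1))

noncomputable def artanh (x : ℝ) : ℝ := (1 / 2) * Real.log ((1 + x) / (1 - x))

/-- Hyperbolic distance in the Cayley–Klein projective model. -/
noncomputable def dK {n : ℕ} (u w : EuclideanSpace ℝ (Fin n)) : ℝ :=
  _root_.arcosh ((1 - ⟪u, w⟫) / Real.sqrt ((1 - ‖u‖ ^ 2) * (1 - ‖w‖ ^ 2)))

/-!
The vertices `E i` are unit vectors with pairwise inner products `γ = -1/n`, so the centroid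
`c_B` of a set `B` of vertices satisfies `⟪c_A, c_B⟫ = γ + (1 - γ)/#B` whenever `A ⊆ B`.
In particular `⟪c, c'⟫ = ‖c‖²`: the segment from `c` to `c'` is orthogonal to the ray through `c`.
In the Klein model a right angle at `u` between the ray `0u` and the segment `uw` turns the
distance formula into `d_K(u, w) = artanh (‖w - u‖ / √(1 - ‖u‖²))`, which is the identity
`cosh (artanh x) = 1 / √(1 - x²)`. It remains to evaluate `‖c' - c‖² = ‖c'‖² - ‖c‖²`.
-/

theorem arcosh_one_div_sqrt_one_sub_sq {x : ℝ} (hx0 : 0 ≤ x) (hx1 : x < 1) :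
    _root_.arcosh (1 / √(1 - x ^ 2)) = _root_.artanh x := by
  have hpos : 0 < 1 - x ^ 2 := by nlinarith
  have hsq : √(1 - x ^ 2) ^ 2 = 1 - x ^ 2 := sq_sqrt hpos.le
  have hroot : √((1 / √(1 - x ^ 2)) ^ 2 - 1) = x / √(1 - x ^ 2) := by
    rw [← sqrt_sq (by positivity : 0 ≤ x / √(1 - x ^ 2))]
    congr 1
    field_simp
    rw [hsq]
    ring
  have hratio : (1 + x) / (1 - x) = ((1 + x) / √(1 - x ^ 2)) ^ 2 := by
    rw [div_pow, hsq]
    field_simp [(by linarith : (1 : ℝ) - x ≠ 0)]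
    ring
  rw [_root_.arcosh, _root_.artanh, hroot, hratio, log_pow]
  ring_nf

theorem dK_eq_artanh_of_inner_eq {n : ℕ} {u w : EuclideanSpace ℝ (Fin n)}
    (hperp : ⟪u, w⟫ = ‖u‖ ^ 2) (hw : ‖w‖ < 1) :
    dK u w = _root_.artanh (‖w - u‖ / √(1 - ‖u‖ ^ 2)) := by
  have hdiff : ‖w - u‖ ^ 2 = ‖w‖ ^ 2 - ‖u‖ ^ 2 := by
    rw [norm_sub_sq_real, real_inner_comm, hperp]
    ring
  have hu : ‖u‖ ^ 2 ≤ ‖w‖ ^ 2 := by nlinarith [sq_nonneg ‖w - u‖]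
  have hQ : 0 < 1 - ‖w‖ ^ 2 := by nlinarith [norm_nonneg w]
  have hP : 0 < 1 - ‖u‖ ^ 2 := by linarith
  have hx1 : ‖w - u‖ / √(1 - ‖u‖ ^ 2) < 1 := by
    rw [div_lt_one (sqrt_pos.2 hP), ← sqrt_sq (norm_nonneg _)]
    exact sqrt_lt_sqrt (sq_nonneg _) (by linarith)
  have hcosh : (1 - ⟪u, w⟫) / √((1 - ‖u‖ ^ 2) * (1 - ‖w‖ ^ 2)) =
      1 / √(1 - (‖w - u‖ / √(1 - ‖u‖ ^ 2)) ^ 2) := by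
    rw [div_pow, sq_sqrt hP.le, hdiff, hperp,
      show 1 - (‖w‖ ^ 2 - ‖u‖ ^ 2) / (1 - ‖u‖ ^ 2) = (1 - ‖w‖ ^ 2) / (1 - ‖u‖ ^ 2) by
        field_simp; ring,
      sqrt_div' _ hP.le, sqrt_mul hP.le, one_div_div]
    field_simp
    rw [sq_sqrt hP.le]
  rw [dK, hcosh, arcosh_one_div_sqrt_one_sub_sq (by positivity) hx1]

theorem dK_smul_eq_artanh_of_inner_eq {n : ℕ} {u w : EuclideanSpace ℝ (Fin n)} {s : ℝ}
    (hperp : ⟪u, w⟫ = ‖u‖ ^ 2) (hw : ‖w‖ ≤ 1) (hs0 : 0 ≤ s) (hs1 : s < 1) :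
    dK (s • u) (s • w) = _root_.artanh (s * ‖w - u‖ / √(1 - s ^ 2 * ‖u‖ ^ 2)) := by
  have hperp' : ⟪s • u, s • w⟫ = ‖s • u‖ ^ 2 := by
    rw [real_inner_smul_left, real_inner_smul_right, hperp, norm_smul, norm_of_nonneg hs0]
    ring
  have hw' : ‖s • w‖ < 1 := by
    rw [norm_smul, norm_of_nonneg hs0]
    exact (mul_le_of_le_one_right hs0 hw).trans_lt hs1
  rw [dK_eq_artanh_of_inner_eq hperp' hw', ← smul_sub, norm_smul, norm_smul, norm_of_nonneg hs0,
    mul_pow]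

theorem norm_inv_natCast_smul_sum_le_one {F : Type*} [SeminormedAddCommGroup F]
    [NormedSpace ℝ F] {m : ℕ} {v : Fin m → F} (hv : ∀ i, ‖v i‖ ≤ 1) :
    ‖(m : ℝ)⁻¹ • ∑ i, v i‖ ≤ 1 := by
  rcases Nat.eq_zero_or_pos m with rfl | hm
  · simp
  calc ‖(m : ℝ)⁻¹ • ∑ i, v i‖ ≤ (m : ℝ)⁻¹ * ∑ i, ‖v i‖ := by
        rw [norm_smul, norm_inv, Real.norm_natCast]
        exact mul_le_mul_of_nonneg_left (norm_sum_le _ _) (by positivity)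
    _ ≤ (m : ℝ)⁻¹ * m := by
        gcongr
        simpa using Finset.sum_le_sum fun i (_ : i ∈ Finset.univ) => hv i
    _ = 1 := inv_mul_cancel₀ (by positivity)

theorem sin_mem_Ico_of_mem_Ico {t : ℝ} (ht : t ∈ Set.Ico 0 (π / 2)) : sin t ∈ Set.Ico 0 1 := by
  refine ⟨sin_nonneg_of_nonneg_of_le_pi ht.1 (by linarith [ht.2, pi_pos]), ?_⟩
  rw [← sin_pi_div_two]
  exact sin_lt_sin_of_lt_of_le_pi_div_two (by linarith [ht.1, pi_pos]) le_rfl ht.2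

section Equiangular

open Finset

variable {F ι : Type*} [NormedAddCommGroup F] [InnerProductSpace ℝ F] [DecidableEq ι]
  {E : ι → F} {γ : ℝ}

theorem inner_sum_sum_of_equiangular (hnorm : ∀ i, ‖E i‖ = 1)
    (hinner : ∀ i j, i ≠ j → ⟪E i, E j⟫ = γ) (A B : Finset ι) :
    ⟪∑ i ∈ A, E i, ∑ j ∈ B, E j⟫ = γ * #A * #B + (1 - γ) * #(A ∩ B) := by
  have hgram : ∀ i j, ⟪E i, E j⟫ = γ + if i = j then 1 - γ else 0 := by
    intro i j
    by_cases hij : i = j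
    · rw [if_pos hij, hij, real_inner_self_eq_norm_sq, hnorm]
      ring
    · rw [if_neg hij, hinner i j hij, add_zero]
  simp_rw [sum_inner, inner_sum, hgram, sum_add_distrib, sum_ite_eq,
    sum_ite_mem, sum_const, nsmul_eq_mul]
  ring

theorem inner_centroid_centroid_of_equiangular (hnorm : ∀ i, ‖E i‖ = 1)
    (hinner : ∀ i j, i ≠ j → ⟪E i, E j⟫ = γ) {A B : Finset ι} (hAB : A ⊆ B)
    (hA : A.Nonempty) :
    ⟪(#A : ℝ)⁻¹ • ∑ i ∈ A, E i, (#B : ℝ)⁻¹ • ∑ j ∈ B, E j⟫ = γ + (1 - γ) / #B := by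
  have hA0 : (#A : ℝ) ≠ 0 := by exact_mod_cast hA.card_pos.ne'
  have hB0 : (#B : ℝ) ≠ 0 := by exact_mod_cast (hA.mono hAB).card_pos.ne'
  rw [real_inner_smul_left, real_inner_smul_right,
    inner_sum_sum_of_equiangular hnorm hinner, inter_eq_left.2 hAB]
  field_simp

theorem inner_centroid_castLE_of_equiangular {N p q : ℕ} {E : Fin N → F}
    (hnorm : ∀ i, ‖E i‖ = 1) (hinner : ∀ i j, i ≠ j → ⟪E i, E j⟫ = γ)
    (hp : 0 < p) (hpq : p ≤ q) (hq : q ≤ N) :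
    ⟪(p : ℝ)⁻¹ • ∑ i : Fin p, E (Fin.castLE (hpq.trans hq) i),
      (q : ℝ)⁻¹ • ∑ j : Fin q, E (Fin.castLE hq j)⟫ = γ + (1 - γ) / q := by
  have hsub : univ.map (Fin.castLEEmb (hpq.trans hq)) ⊆ univ.map (Fin.castLEEmb hq) := by
    intro x hx
    obtain ⟨i, -, rfl⟩ := mem_map.1 hx
    exact mem_map.2 ⟨Fin.castLE hpq i, mem_univ _, rfl⟩
  have hne : (univ.map (Fin.castLEEmb (hpq.trans hq))).Nonempty :=
    (univ_nonempty_iff.2 ⟨⟨0, hp⟩⟩).map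
  simpa [sum_map] using inner_centroid_centroid_of_equiangular hnorm hinner hsub hne

end Equiangular

theorem orthoscheme_edge_length (n : ℕ) (hn : 2 ≤ n) (t : ℝ) (ht : t ∈ Set.Ico 0 (π / 2))
    (s : ℝ) (hs : s = Real.sin t)
    (E : Fin (n + 1) → EuclideanSpace ℝ (Fin n))
    (hnorm : ∀ i, ‖E i‖ = 1)
    (hinner : ∀ i j, i ≠ j → ⟪E i, E j⟫ = -1 / (n : ℝ))
    (k : ℕ) (hk : k ≤ n - 1)
    (c c' : EuclideanSpace ℝ (Fin n))
    (hc : c = ((n : ℝ) - k + 1)⁻¹ • ∑ i : Fin (n - k + 1), E (Fin.castLE (by omega) i))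
    (hc' : c' = ((n : ℝ) - k)⁻¹ • ∑ i : Fin (n - k), E (Fin.castLE (by omega) i)) :
    dK (s • c) (s • c') =
      _root_.artanh (s * Real.sqrt (1 - (k : ℝ) / (n * ((n : ℝ) - k + 1))) /
        (((n : ℝ) - k) * Real.sqrt (1 - s ^ 2 * ((k : ℝ) / (n * ((n : ℝ) - k + 1)))))) := by
  have hkn : k < n := by omega
  have hsub : ((n - k : ℕ) : ℝ) = n - k := Nat.cast_sub hkn.le
  have hsub1 : ((n - k + 1 : ℕ) : ℝ) = n - k + 1 := by push_cast [hsub]; ring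
  have hpos : (0 : ℝ) < n - k := by rw [← hsub]; exact_mod_cast Nat.sub_pos_of_lt hkn
  rw [← hsub1] at hc
  rw [← hsub] at hc'
  have hcc : ⟪c, c⟫ = -1 / n + (1 - -1 / n) / (n - k + 1) := by
    rw [hc, inner_centroid_castLE_of_equiangular hnorm hinner (by omega) le_rfl _, hsub1]
  have hcc' : ⟪c, c'⟫ = ‖c‖ ^ 2 := by
    rw [← real_inner_self_eq_norm_sq, hcc, real_inner_comm, hc, hc', ← hsub1,
      inner_centroid_castLE_of_equiangular hnorm hinner (by omega) (by omega) _]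
  have hc'c' : ⟪c', c'⟫ = -1 / n + (1 - -1 / n) / (n - k) := by
    rw [hc', inner_centroid_castLE_of_equiangular hnorm hinner (by omega) le_rfl _, hsub]
  set a : ℝ := k / (n * (n - k + 1)) with ha
  have hca : ‖c‖ ^ 2 = a := by
    rw [← real_inner_self_eq_norm_sq, hcc, ha]
    field_simp
    ring
  have hdist : ‖c' - c‖ = √(1 - a) / (n - k) := by
    have hsq : ‖c' - c‖ ^ 2 = (1 - a) / (n - k) ^ 2 := by
      rw [norm_sub_sq_real, real_inner_comm, hcc', ← real_inner_self_eq_norm_sq, hc'c', hca, ha]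
      field_simp
      ring
    rw [← sqrt_sq (norm_nonneg _), hsq, sqrt_div' _ (sq_nonneg _), sqrt_sq hpos.le]
  have hc'1 : ‖c'‖ ≤ 1 := hc' ▸ norm_inv_natCast_smul_sum_le_one fun i => (hnorm _).le
  obtain ⟨hs0, hs1⟩ := hs ▸ sin_mem_Ico_of_mem_Ico ht
  rw [dK_smul_eq_artanh_of_inner_eq hcc' hc'1 hs0 hs1, hca, hdist, mul_div_assoc', div_div]
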